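/- Diagnosability of a system under a DTA observer reduces to static diagnosability of the product: for every Δ ∈ ℕ, a timed automaton A is (Obs, Δ)-diagnosable if and only if the product automaton A ⊗ Obs is (Σ, Δ)-diagnosable, where A ⊗ Obs relabels each action λ of A as τ whenever λ is not in the observation set O(n) of the current observer location n. -/
import Mathlib


open scoped NNReal

/-- A finite timed word over `α`: an element of `(ℝ≥0·α)*·ℝ≥0`. -/
structure TimedWord (α : Type) where
  pairs : List (ℝ≥0 × α)
  last : ℝ≥0

namespace TimedWord

/-- Duration: sum of all delays. -/
def dur {α} (w : TimedWord α) : ℝ≥0 := (w.pairs.map Prod.fst).sum + w.last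

/-- Concatenation: the trailing delay of `u` is merged (added) with the leading delay of `v`. -/
def concat {α} (u v : TimedWord α) : TimedWord α :=
  match v.pairs with
  | [] => ⟨u.pairs, u.last + v.last⟩
  | (d, a) :: rest => ⟨u.pairs ++ (u.last + d, a) :: rest, v.last⟩

/-- Untiming: erase all delays. -/
def unt {α} (w : TimedWord α) : List α := w.pairs.map Prod.snd

open Classical in
/-- Projection helper: `pend` is the accumulated delay of erased letters. -/
noncomputable def projAux {α} (S : Set α) :
    ℝ≥0 → List (ℝ≥0 × α) → ℝ≥0 → TimedWord α
  | pend, [], last => ⟨[], pend + last⟩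
  | pend, (d, a) :: rest, last =>
      if a ∈ S then
        let w := projAux S 0 rest last
        ⟨(pend + d, a) :: w.pairs, w.last⟩
      else projAux S (pend + d) rest last

/-- Projection of a timed word onto the sub-alphabet `S`: letters outside `S`
are erased and adjacent delays are summed. -/
noncomputable def proj {α} (S : Set α) (w : TimedWord α) : TimedWord α :=
  projAux S 0 w.pairs w.last

end TimedWord

/-- Actions of the system: an observable event, the silent action `τ`, or the fault `f`. -/
inductive Act (α : Type) where
  | ev (a : α) | tau | fault
  deriving DecidableEq

/-- A run of a timed automaton over `α ∪ {τ, f}`, identified with the alternating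
sequence of delays and discrete actions it performs. -/
abbrev Run (α : Type) := TimedWord (Act α)

/-- A timed automaton over `α ∪ {τ, f}`, identified with its set of runs. -/
structure TA (α : Type) where
  runs : Set (Run α)

/-- The trace of a run: erase `τ` and `f`, preserving elapsed time. -/
def trAux {α} : ℝ≥0 → List (ℝ≥0 × Act α) → ℝ≥0 → TimedWord α
  | pend, [], last => ⟨[], pend + last⟩
  | pend, (d, Act.ev a) :: rest, last =>
      let w := trAux 0 rest last
      ⟨(pend + d, a) :: w.pairs, w.last⟩
  | pend, (d, Act.tau) :: rest, last => trAux (pend + d) rest last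
  | pend, (d, Act.fault) :: rest, last => trAux (pend + d) rest last

def tr {α} (ρ : Run α) : TimedWord α := trAux 0 ρ.pairs ρ.last

/-- A run is `Δ`-faulty if it contains a fault move after which at least `Δ`
time units elapse. -/
def Faulty {α} (Δ : ℕ) (ρ : Run α) : Prop :=
  ∃ (l₁ : List (ℝ≥0 × Act α)) (d : ℝ≥0) (l₂ : List (ℝ≥0 × Act α)),
    ρ.pairs = l₁ ++ (d, Act.fault) :: l₂ ∧
    (Δ : ℝ≥0) ≤ (l₂.map Prod.fst).sum + ρ.last

/-- A run is non-faulty if it contains no occurrence of the fault. -/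
def NonFaulty {α} (ρ : Run α) : Prop := ∀ p ∈ ρ.pairs, p.2 ≠ Act.fault

/-- `A` is `(Σₒ, Δ)`-diagnosable: there is a diagnoser `D` answering `0` on
(projected traces of) non-faulty runs and `1` on `Δ`-faulty runs. -/
def Diagnosable {α} (A : TA α) (S : Set α) (Δ : ℕ) : Prop :=
  ∃ D : TimedWord α → Bool,
    (∀ ρ ∈ A.runs, NonFaulty ρ → D (TimedWord.proj S (tr ρ)) = false) ∧
    (∀ ρ ∈ A.runs, Faulty Δ ρ → D (TimedWord.proj S (tr ρ)) = true)

/-- A dynamic observer over `α`, given semantically: a deterministic, complete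
machine with states (location + clock valuation), a set `obsSet s` of events it
currently observes, discrete steps, and time elapsing.  An unobserved event
does not change the state (neither location nor clocks). -/
structure Observer (α : Type) where
  State : Type
  init : State
  obsSet : State → Set α
  step : State → α → State
  delay : State → ℝ≥0 → State
  step_unobs : ∀ s a, a ∉ obsSet s → step s a = s
  delay_zero : ∀ s, delay s 0 = s
  delay_add : ∀ s d d', delay (delay s d) d' = delay s (d + d')

open Classical in
/-- Observation of a timed word by an observer, from state `s` with pending
(unobserved) delay `pend`: keep exactly the letters that are in the current
observation set when they occur, summing delays adjacent to erased letters. -/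
noncomputable def obsAux {α : Type} (O : Observer α) :
    O.State → ℝ≥0 → List (ℝ≥0 × α) → ℝ≥0 → TimedWord α
  | _, pend, [], last => ⟨[], pend + last⟩
  | s, pend, (d, a) :: rest, last =>
      let s' := O.delay s d
      if a ∈ O.obsSet s' then
        let w := obsAux O (O.step s' a) 0 rest last
        ⟨(pend + d, a) :: w.pairs, w.last⟩
      else obsAux O s' (pend + d) rest last

/-- The observation map `⟦Obs⟧ : TW*(α) → TW*(α)`. -/
noncomputable def obsMap {α : Type} (O : Observer α) (w : TimedWord α) : TimedWord α :=
  obsAux O O.init 0 w.pairs w.last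

/-- `A` is `(Obs, Δ)`-diagnosable: there is a diagnoser `D` answering `0` on
observations of non-faulty runs and `1` on observations of `Δ`-faulty runs. -/
def ObsDiagnosable {α : Type} (A : TA α) (O : Observer α) (Δ : ℕ) : Prop :=
  ∃ D : TimedWord α → Bool,
    (∀ ρ ∈ A.runs, NonFaulty ρ → D (obsMap O (tr ρ)) = false) ∧
    (∀ ρ ∈ A.runs, Faulty Δ ρ → D (obsMap O (tr ρ)) = true)

open Classical in
/-- The relabeling of a run of `A` by the product `A ⊗ Obs`: an action
`λ ∈ Σ` is relabeled `τ` whenever `λ` is not in the observation set of the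
current observer state; `τ`- and `f`-moves of `A` are taken alone (the observer
only elapses time on them). -/
noncomputable def relabelAux {α : Type} (O : Observer α) :
    O.State → List (ℝ≥0 × Act α) → List (ℝ≥0 × Act α)
  | _, [] => []
  | s, (d, Act.ev a) :: rest =>
      let s' := O.delay s d
      if a ∈ O.obsSet s' then (d, Act.ev a) :: relabelAux O (O.step s' a) rest
      else (d, Act.tau) :: relabelAux O s' rest
  | s, (d, Act.tau) :: rest => (d, Act.tau) :: relabelAux O (O.delay s d) rest
  | s, (d, Act.fault) :: rest => (d, Act.fault) :: relabelAux O (O.delay s d) rest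

/-- The product `A ⊗ Obs`, identified with its set of (relabeled) runs. -/
noncomputable def product {α : Type} (A : TA α) (O : Observer α) : TA α :=
  ⟨(fun ρ : Run α => (⟨relabelAux O O.init ρ.pairs, ρ.last⟩ : Run α)) '' A.runs⟩

section Aux

variable {α : Type}

lemma projAux_univ : ∀ (l : List (ℝ≥0 × α)) (last : ℝ≥0),
    TimedWord.projAux Set.univ 0 l last = ⟨l, last⟩ := by
  intro l
  induction l with
  | nil => intro last; simp [TimedWord.projAux]
  | cons p rest IH =>
    intro last
    obtain ⟨d, a⟩ := p
    simp [TimedWord.projAux, IH]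

lemma relabel_map_fst (O : Observer α) :
    ∀ (l : List (ℝ≥0 × Act α)) (s : O.State),
      (relabelAux O s l).map Prod.fst = l.map Prod.fst := by
  intro l
  induction l with
  | nil => intro s; simp [relabelAux]
  | cons p rest IH =>
    intro s
    obtain ⟨d, a⟩ := p
    cases a with
    | ev a =>
      by_cases h : a ∈ O.obsSet (O.delay s d) <;> simp [relabelAux, h, IH]
    | tau => simp [relabelAux, IH]
    | fault => simp [relabelAux, IH]

lemma trAux_relabel (O : Observer α) :
    ∀ (l : List (ℝ≥0 × Act α)) (s : O.State) (p q last : ℝ≥0),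
      trAux (q + p) (relabelAux O (O.delay s p) l) last
        = obsAux O s q (trAux p l last).pairs (trAux p l last).last := by
  intro l
  induction l with
  | nil => intro s p q last; simp [relabelAux, trAux, obsAux, add_assoc]
  | cons pr rest IH =>
    intro s p q last
    obtain ⟨d, a⟩ := pr
    cases a with
    | ev a =>
      by_cases h : a ∈ O.obsSet (O.delay s (p + d))
      · have h' : a ∈ O.obsSet (O.delay (O.delay s p) d) := by
          rw [O.delay_add]; exact h
        have hIH := IH (O.step (O.delay s (p + d)) a) 0 0 last
        rw [O.delay_zero, zero_add] at hIH
        simp only [relabelAux, if_pos h', trAux, obsAux, if_pos h, O.delay_add]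
        rw [← hIH, add_assoc]
      · have h' : a ∉ O.obsSet (O.delay (O.delay s p) d) := by
          rw [O.delay_add]; exact h
        have hIH := IH (O.delay s (p + d)) 0 (q + (p + d)) last
        rw [O.delay_zero, add_zero] at hIH
        simp only [relabelAux, if_neg h', trAux, obsAux, if_neg h, O.delay_add]
        rw [← hIH, add_assoc]
    | tau =>
      have hIH := IH s (p + d) q last
      simp only [relabelAux, trAux, O.delay_add]
      rw [← hIH, add_assoc]
    | fault =>
      have hIH := IH s (p + d) q last
      simp only [relabelAux, trAux, O.delay_add]
      rw [← hIH, add_assoc]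

lemma key_obs (O : Observer α) (ρ : Run α) :
    TimedWord.proj Set.univ (tr (⟨relabelAux O O.init ρ.pairs, ρ.last⟩ : Run α))
      = obsMap O (tr ρ) := by
  have h := trAux_relabel O ρ.pairs O.init 0 0 ρ.last
  rw [O.delay_zero, zero_add] at h
  show TimedWord.projAux Set.univ 0 _ _ = _
  unfold tr obsMap
  simp only []
  rw [projAux_univ]
  exact h

lemma relabel_nonfault (O : Observer α) :
    ∀ (l : List (ℝ≥0 × Act α)) (s : O.State),
      (∀ p ∈ relabelAux O s l, p.2 ≠ Act.fault) ↔ (∀ p ∈ l, p.2 ≠ Act.fault) := by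
  intro l
  induction l with
  | nil => intro s; simp [relabelAux]
  | cons p rest IH =>
    intro s
    obtain ⟨d, a⟩ := p
    cases a with
    | ev a =>
      by_cases h : a ∈ O.obsSet (O.delay s d)
      · simp only [relabelAux, if_pos h, List.forall_mem_cons, IH] <;> simp
      · simp only [relabelAux, if_neg h, List.forall_mem_cons, IH] <;> simp
    | tau =>
      simp only [relabelAux, List.forall_mem_cons, IH] <;> simp
    | fault =>
      simp only [relabelAux, List.forall_mem_cons, IH] <;> simp

lemma relabel_append (O : Observer α) :
    ∀ (l₁ : List (ℝ≥0 × Act α)) (s : O.State) (d : ℝ≥0) (l₂ : List (ℝ≥0 × Act α)),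
      ∃ s', relabelAux O s (l₁ ++ (d, Act.fault) :: l₂)
        = relabelAux O s l₁ ++ (d, Act.fault) :: relabelAux O s' l₂ := by
  intro l₁
  induction l₁ with
  | nil =>
    intro s d l₂
    exact ⟨O.delay s d, by simp [relabelAux]⟩
  | cons p rest IH =>
    intro s d l₂
    obtain ⟨d₀, a⟩ := p
    cases a with
    | ev a =>
      by_cases h : a ∈ O.obsSet (O.delay s d₀)
      · obtain ⟨s', hs'⟩ := IH (O.step (O.delay s d₀) a) d l₂
        exact ⟨s', by simp [relabelAux, h, hs']⟩
      · obtain ⟨s', hs'⟩ := IH (O.delay s d₀) d l₂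
        exact ⟨s', by simp [relabelAux, h, hs']⟩
    | tau =>
      obtain ⟨s', hs'⟩ := IH (O.delay s d₀) d l₂
      exact ⟨s', by simp [relabelAux, hs']⟩
    | fault =>
      obtain ⟨s', hs'⟩ := IH (O.delay s d₀) d l₂
      exact ⟨s', by simp [relabelAux, hs']⟩

lemma relabel_append_inv (O : Observer α) :
    ∀ (l : List (ℝ≥0 × Act α)) (s : O.State) (l₁' : List (ℝ≥0 × Act α))
      (d : ℝ≥0) (l₂' : List (ℝ≥0 × Act α)),
      relabelAux O s l = l₁' ++ (d, Act.fault) :: l₂' →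
      ∃ l₁ l₂ s', l = l₁ ++ (d, Act.fault) :: l₂ ∧ l₂' = relabelAux O s' l₂ := by
  intro l
  induction l with
  | nil =>
    intro s l₁' d l₂' h
    simp [relabelAux] at h
  | cons p rest IH =>
    intro s l₁' d l₂' h
    obtain ⟨d₀, a⟩ := p
    cases a with
    | ev a =>
      simp only [relabelAux] at h
      by_cases hm : a ∈ O.obsSet (O.delay s d₀)
      · rw [if_pos hm] at h
        cases l₁' with
        | nil => simp at h
        | cons x l₁'' =>
          simp only [List.cons_append, List.cons.injEq] at h
          obtain ⟨l₁, l₂, s', h1, h2⟩ := IH _ _ _ _ h.2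
          exact ⟨(d₀, Act.ev a) :: l₁, l₂, s', by simp [h1], h2⟩
      · rw [if_neg hm] at h
        cases l₁' with
        | nil => simp at h
        | cons x l₁'' =>
          simp only [List.cons_append, List.cons.injEq] at h
          obtain ⟨l₁, l₂, s', h1, h2⟩ := IH _ _ _ _ h.2
          exact ⟨(d₀, Act.ev a) :: l₁, l₂, s', by simp [h1], h2⟩
    | tau =>
      simp only [relabelAux] at h
      cases l₁' with
      | nil => simp at h
      | cons x l₁'' =>
        simp only [List.cons_append, List.cons.injEq] at h
        obtain ⟨l₁, l₂, s', h1, h2⟩ := IH _ _ _ _ h.2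
        exact ⟨(d₀, Act.tau) :: l₁, l₂, s', by simp [h1], h2⟩
    | fault =>
      simp only [relabelAux] at h
      cases l₁' with
      | nil =>
        simp only [List.nil_append, List.cons.injEq, Prod.mk.injEq] at h
        exact ⟨[], rest, O.delay s d₀, by simp [h.1.1], h.2.symm⟩
      | cons x l₁'' =>
        simp only [List.cons_append, List.cons.injEq] at h
        obtain ⟨l₁, l₂, s', h1, h2⟩ := IH _ _ _ _ h.2
        exact ⟨(d₀, Act.fault) :: l₁, l₂, s', by simp [h1], h2⟩

lemma faulty_relabel (O : Observer α) (Δ : ℕ) (ρ : Run α) :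
    Faulty Δ (⟨relabelAux O O.init ρ.pairs, ρ.last⟩ : Run α) ↔ Faulty Δ ρ := by
  constructor
  · rintro ⟨l₁', d, l₂', h1, h2⟩
    obtain ⟨l₁, l₂, s', hl, hl2⟩ := relabel_append_inv O ρ.pairs O.init l₁' d l₂' h1
    refine ⟨l₁, d, l₂, hl, ?_⟩
    rwa [hl2, relabel_map_fst] at h2
  · rintro ⟨l₁, d, l₂, h1, h2⟩
    obtain ⟨s', hs'⟩ := relabel_append O l₁ O.init d l₂
    refine ⟨relabelAux O O.init l₁, d, relabelAux O s' l₂, ?_, ?_⟩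
    · show relabelAux O O.init ρ.pairs = _
      rw [h1, hs']
    · rwa [relabel_map_fst]

lemma nonfaulty_relabel (O : Observer α) (ρ : Run α) :
    NonFaulty (⟨relabelAux O O.init ρ.pairs, ρ.last⟩ : Run α) ↔ NonFaulty ρ :=
  relabel_nonfault O ρ.pairs O.init

end Aux

/-- for every `Δ`, `A` is `(Obs, Δ)`-diagnosable iff the product
`A ⊗ Obs` is `(Σ, Δ)`-diagnosable (static diagnosability with full observation). -/
theorem obs_diag_iff_product {α : Type} (A : TA α) (O : Observer α) :
    ∀ Δ : ℕ, ObsDiagnosable A O Δ ↔ Diagnosable (product A O) Set.univ Δ := by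
  intro Δ
  constructor
  · rintro ⟨D, hnf, hf⟩
    refine ⟨D, ?_, ?_⟩
    · rintro ρ' ⟨ρ, hρ, rfl⟩ hNF
      rw [key_obs]
      exact hnf ρ hρ ((nonfaulty_relabel O ρ).mp hNF)
    · rintro ρ' ⟨ρ, hρ, rfl⟩ hF
      rw [key_obs]
      exact hf ρ hρ ((faulty_relabel O _ ρ).mp hF)
  · rintro ⟨D, hnf, hf⟩
    refine ⟨D, ?_, ?_⟩
    · intro ρ hρ hNF
      rw [← key_obs]
      exact hnf _ ⟨ρ, hρ, rfl⟩ ((nonfaulty_relabel O ρ).mpr hNF)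
    · intro ρ hρ hF
      rw [← key_obs]
      exact hf _ ⟨ρ, hρ, rfl⟩ ((faulty_relabel O _ ρ).mpr hF)
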